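/- arXiv:1406.3782 — 2 statements merged into one kernel-verified Lean document; each statement's English description precedes it below -/
import Mathlib

section
/- Let m(m̂) = (ρ² m̂ /(1+m̂)) ∫ Dz z² [ (1−ρ)(1+m̂)^{1/2} e^{−(m̂/2)z²} + ρ ]^{−1} for 0 < ρ < 1. Then m̂ (ρ − m(m̂)) → ρ as m̂ → ∞; that is, m(m̂) = ρ(1 − m̂^{−1}) + o(m̂^{−1}). -/
/-!
Write `g = (1 - ρ) (1 + m̂)^{1/2} e^{-m̂ z²/2}`. Since `1/(g + ρ) = (1 - g/(g + ρ))/ρ`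
and `∫ Dz z² = 1`, one gets `m̂ (ρ - m) = ρ m̂/(1 + m̂) · (1 + m̂ D)` with
`D = ∫ Dz z² g/(g + ρ)`.
The bound `g/(g + ρ) ≤ √(g/ρ)` halves the exponent of the Gaussian factor, and the moment
`∫ Dz z² e^{-m̂ z²/4} = (1 + m̂/2)^{-3/2}` then gives `m̂ D = O(m̂^{-1/4})`.
-/

open MeasureTheory Real Filter

/-- Standard Gaussian density. -/
noncomputable def stdGauss (t : ℝ) : ℝ := Real.exp (-t ^ 2 / 2) / Real.sqrt (2 * Real.pi)

theorem integrable_sq_mul_exp_neg_mul_sq {b : ℝ} (hb : 0 < b) :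
    Integrable fun x : ℝ => x ^ 2 * exp (-b * x ^ 2) := by
  simpa using integrable_rpow_mul_exp_neg_mul_sq hb (by norm_num : (-1 : ℝ) < 2)

theorem integral_sq_mul_exp_neg_mul_sq {b : ℝ} (hb : 0 < b) :
    ∫ x : ℝ, x ^ 2 * exp (-b * x ^ 2) = √(π / b) / (2 * b) := by
  have hderiv (x : ℝ) : HasDerivAt (fun x => x * exp (-b * x ^ 2))
      (exp (-b * x ^ 2) - 2 * b * (x ^ 2 * exp (-b * x ^ 2))) x := by
    refine ((hasDerivAt_id' x).fun_mul ((hasDerivAt_pow 2 x).const_mul (-b)).exp).congr_deriv ?_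
    push_cast; ring
  have h := integral_eq_zero_of_hasDerivAt_of_integrable hderiv
    ((integrable_exp_neg_mul_sq hb).sub ((integrable_sq_mul_exp_neg_mul_sq hb).const_mul _))
    (integrable_mul_exp_neg_mul_sq hb)
  rw [integral_sub (integrable_exp_neg_mul_sq hb)
    ((integrable_sq_mul_exp_neg_mul_sq hb).const_mul _), integral_const_mul,
    integral_gaussian] at h
  rw [eq_div_iff (by positivity)]
  linarith

lemma stdGauss_mul_sq_mul_exp (c z : ℝ) :
    stdGauss z * z ^ 2 * exp (-c * z ^ 2) =
      (√(2 * π))⁻¹ * (z ^ 2 * exp (-((1 + 2 * c) / 2) * z ^ 2)) := by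
  rw [stdGauss, show -((1 + 2 * c) / 2) * z ^ 2 = -z ^ 2 / 2 + -c * z ^ 2 by ring, exp_add]
  ring

lemma integrable_stdGauss_mul_sq_mul_exp {c : ℝ} (hc : -1 / 2 < c) :
    Integrable fun z => stdGauss z * z ^ 2 * exp (-c * z ^ 2) := by
  simp only [stdGauss_mul_sq_mul_exp]
  exact (integrable_sq_mul_exp_neg_mul_sq (by linarith)).const_mul _

lemma integral_stdGauss_mul_sq_mul_exp {c : ℝ} (hc : -1 / 2 < c) :
    ∫ z, stdGauss z * z ^ 2 * exp (-c * z ^ 2) = (1 + 2 * c) ^ (-(3 / 2) : ℝ) := by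
  have h : 0 < 1 + 2 * c := by linarith
  simp only [stdGauss_mul_sq_mul_exp]
  rw [integral_const_mul, integral_sq_mul_exp_neg_mul_sq (by linarith),
    show π / ((1 + 2 * c) / 2) = 2 * π / (1 + 2 * c) by field_simp, sqrt_div' _ h.le,
    show (-(3 / 2) : ℝ) = -1 - 1 / 2 by norm_num, rpow_sub h, rpow_neg_one, ← sqrt_eq_rpow]
  field_simp

lemma integrable_stdGauss_mul_sq : Integrable fun z => stdGauss z * z ^ 2 := by
  simpa using integrable_stdGauss_mul_sq_mul_exp (c := 0) (by norm_num)

lemma integral_stdGauss_mul_sq : ∫ z, stdGauss z * z ^ 2 = 1 := by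
  simpa using integral_stdGauss_mul_sq_mul_exp (c := 0) (by norm_num)

lemma div_add_le_sqrt_div {a b : ℝ} (ha : 0 ≤ a) (hb : 0 < b) : a / (a + b) ≤ √(a / b) := by
  apply le_sqrt_of_sq_le
  rw [div_pow, div_le_div_iff₀ (by positivity) hb]
  nlinarith [mul_nonneg ha (sq_nonneg b), mul_nonneg (mul_nonneg ha ha) hb.le]

lemma mul_rpow_le_rpow_neg {x : ℝ} (hx : 0 ≤ x) :
    x * (1 + x) ^ (1 / 4 : ℝ) * (1 + x / 2) ^ (-(3 / 2) : ℝ) ≤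
      4 * (1 + x / 2) ^ (-(1 / 4) : ℝ) := by
  set u := 1 + x / 2 with hu_def
  have hu : 0 < u := by positivity
  have hxu : x ≤ 2 * u := by linarith
  have hroot : (1 + x) ^ (1 / 4 : ℝ) ≤ 2 * u ^ (1 / 4 : ℝ) :=
    calc (1 + x) ^ (1 / 4 : ℝ) ≤ (2 * u) ^ (1 / 4 : ℝ) := by gcongr; linarith
      _ = 2 ^ (1 / 4 : ℝ) * u ^ (1 / 4 : ℝ) := mul_rpow (by norm_num) hu.le
      _ ≤ 2 * u ^ (1 / 4 : ℝ) := by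
        gcongr
        exact rpow_le_self_of_one_le (by norm_num) (by norm_num)
  calc x * (1 + x) ^ (1 / 4 : ℝ) * u ^ (-(3 / 2) : ℝ)
      ≤ 2 * u * (2 * u ^ (1 / 4 : ℝ)) * u ^ (-(3 / 2) : ℝ) := by gcongr
    _ = 4 * (u ^ (1 : ℝ) * u ^ (1 / 4 : ℝ) * u ^ (-(3 / 2) : ℝ)) := by rw [rpow_one]; ring
    _ = 4 * u ^ (-(1 / 4) : ℝ) := by rw [← rpow_add hu, ← rpow_add hu]; norm_num

noncomputable def nullWeight (ρ mh z : ℝ) : ℝ :=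
  (1 - ρ) * (1 + mh) ^ ((1 : ℝ) / 2) * exp (-(mh / 2) * z ^ 2)

noncomputable def overlapDefect (ρ mh : ℝ) : ℝ :=
  ∫ z, stdGauss z * z ^ 2 * (nullWeight ρ mh z / (nullWeight ρ mh z + ρ))

section OverlapDefect

variable {ρ mh : ℝ}

lemma nullWeight_pos (hρ1 : ρ < 1) (hmh : -1 < mh) (z : ℝ) : 0 < nullWeight ρ mh z := by
  have : 0 < 1 - ρ := by linarith
  have : 0 < 1 + mh := by linarith
  unfold nullWeight
  positivity

lemma continuous_nullWeight (ρ mh : ℝ) : Continuous (nullWeight ρ mh) := by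
  unfold nullWeight
  fun_prop

lemma sqrt_nullWeight_div (hmh : -1 < mh) (ρ z : ℝ) :
    √(nullWeight ρ mh z / ρ) =
      √((1 - ρ) / ρ) * (1 + mh) ^ (1 / 4 : ℝ) * exp (-(mh / 4) * z ^ 2) := by
  have h : 0 ≤ 1 + mh := by linarith
  rw [nullWeight, show (1 - ρ) * (1 + mh) ^ ((1 : ℝ) / 2) * exp (-(mh / 2) * z ^ 2) / ρ =
      (1 - ρ) / ρ * ((1 + mh) ^ ((1 : ℝ) / 2) * exp (-(mh / 2) * z ^ 2)) by ring,
    sqrt_mul' _ (by positivity), sqrt_mul' _ (exp_pos _).le,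
    sqrt_eq_rpow ((1 + mh) ^ ((1 : ℝ) / 2)), ← rpow_mul h,
    ← exp_half]
  ring_nf

lemma integrable_overlapDefect_integrand (hρ0 : 0 < ρ) (hρ1 : ρ < 1) (hmh : -1 < mh) :
    Integrable fun z => stdGauss z * z ^ 2 * (nullWeight ρ mh z / (nullWeight ρ mh z + ρ)) := by
  have hg := nullWeight_pos hρ1 hmh
  refine integrable_stdGauss_mul_sq.mono' ?_ (Eventually.of_forall fun z => ?_)
  · have := continuous_nullWeight ρ mh
    refine Continuous.aestronglyMeasurable ?_
    unfold stdGauss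
    fun_prop (disch := exact fun z => (add_pos (hg z) hρ0).ne')
  · have hfrac : nullWeight ρ mh z / (nullWeight ρ mh z + ρ) ≤ 1 :=
      div_le_one_of_le₀ (by linarith [hg z]) (by linarith [hg z])
    have : 0 ≤ stdGauss z * z ^ 2 := by unfold stdGauss; positivity
    rw [norm_of_nonneg (by have := hg z; positivity)]
    exact mul_le_of_le_one_right this hfrac

lemma overlapDefect_nonneg (hρ0 : 0 < ρ) (hρ1 : ρ < 1) (hmh : -1 < mh) :
    0 ≤ overlapDefect ρ mh :=
  integral_nonneg fun z => by have := nullWeight_pos hρ1 hmh z; unfold stdGauss; positivity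

lemma integral_stdGauss_mul_sq_mul_inv_nullWeight_add (hρ0 : 0 < ρ) (hρ1 : ρ < 1)
    (hmh : -1 < mh) :
    ∫ z, stdGauss z * (z ^ 2 * (nullWeight ρ mh z + ρ)⁻¹) =
      (1 - overlapDefect ρ mh) / ρ := by
  have hsplit (z : ℝ) : stdGauss z * (z ^ 2 * (nullWeight ρ mh z + ρ)⁻¹) =
      ρ⁻¹ * (stdGauss z * z ^ 2) -
        ρ⁻¹ * (stdGauss z * z ^ 2 * (nullWeight ρ mh z / (nullWeight ρ mh z + ρ))) := by
    have := nullWeight_pos hρ1 hmh z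
    field_simp
    ring
  simp_rw [hsplit]
  rw [integral_sub (integrable_stdGauss_mul_sq.const_mul _)
      ((integrable_overlapDefect_integrand hρ0 hρ1 hmh).const_mul _), integral_const_mul,
    integral_const_mul, integral_stdGauss_mul_sq, overlapDefect]
  ring

lemma mul_overlapDefect_le (hρ0 : 0 < ρ) (hρ1 : ρ < 1) (hmh : 0 ≤ mh) :
    mh * overlapDefect ρ mh ≤ √((1 - ρ) / ρ) * (4 * (1 + mh / 2) ^ (-(1 / 4) : ℝ)) := by
  have hmh' : -1 < mh := by linarith
  have hg := nullWeight_pos hρ1 hmh'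
  have hroot (z : ℝ) : stdGauss z * z ^ 2 * √(nullWeight ρ mh z / ρ) =
      √((1 - ρ) / ρ) * (1 + mh) ^ (1 / 4 : ℝ) *
        (stdGauss z * z ^ 2 * exp (-(mh / 4) * z ^ 2)) := by
    rw [sqrt_nullWeight_div hmh']
    ring
  have hc : -1 / 2 < mh / 4 := by linarith
  have hle : overlapDefect ρ mh ≤ ∫ z, stdGauss z * z ^ 2 * √(nullWeight ρ mh z / ρ) := by
    refine integral_mono_of_nonneg (Eventually.of_forall fun z => ?_) ?_
      (Eventually.of_forall fun z => ?_)
    · have := hg z; unfold stdGauss; positivity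
    · simp_rw [hroot]
      exact (integrable_stdGauss_mul_sq_mul_exp hc).const_mul _
    · have : 0 ≤ stdGauss z * z ^ 2 := by unfold stdGauss; positivity
      exact mul_le_mul_of_nonneg_left (div_add_le_sqrt_div (hg z).le hρ0) this
  calc mh * overlapDefect ρ mh
      ≤ mh * ∫ z, stdGauss z * z ^ 2 * √(nullWeight ρ mh z / ρ) :=
        mul_le_mul_of_nonneg_left hle hmh
    _ = √((1 - ρ) / ρ) * (mh * (1 + mh) ^ (1 / 4 : ℝ) * (1 + mh / 2) ^ (-(3 / 2) : ℝ)) := by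
        simp_rw [hroot]
        rw [integral_const_mul, integral_stdGauss_mul_sq_mul_exp hc]
        ring_nf
    _ ≤ √((1 - ρ) / ρ) * (4 * (1 + mh / 2) ^ (-(1 / 4) : ℝ)) :=
        mul_le_mul_of_nonneg_left (mul_rpow_le_rpow_neg hmh) (sqrt_nonneg _)

lemma tendsto_mul_overlapDefect (hρ0 : 0 < ρ) (hρ1 : ρ < 1) :
    Tendsto (fun mh => mh * overlapDefect ρ mh) atTop (nhds 0) := by
  have hbound : Tendsto (fun mh : ℝ => √((1 - ρ) / ρ) * (4 * (1 + mh / 2) ^ (-(1 / 4) : ℝ)))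
      atTop (nhds 0) := by
    have := (tendsto_rpow_neg_atTop (by norm_num : (0 : ℝ) < 1 / 4)).comp
      (tendsto_atTop_add_const_left atTop 1 (tendsto_id.atTop_div_const two_pos))
    simpa using (this.const_mul 4).const_mul √((1 - ρ) / ρ)
  refine squeeze_zero' ?_ ?_ hbound
  · filter_upwards [eventually_ge_atTop 0] with mh hmh
    exact mul_nonneg hmh (overlapDefect_nonneg hρ0 hρ1 (by linarith))
  · filter_upwards [eventually_ge_atTop 0] with mh hmh
    exact mul_overlapDefect_le hρ0 hρ1 hmh

end OverlapDefect

/-- asymptotics of the Bayes-optimal overlap: m̂(ρ − m(m̂)) → ρ as m̂ → ∞,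
i.e. m(m̂) = ρ(1 − m̂⁻¹) + o(m̂⁻¹). -/
theorem overlap_asymptotics (ρ : ℝ) (hρ0 : 0 < ρ) (hρ1 : ρ < 1)
    (m : ℝ → ℝ)
    (hm : ∀ mh : ℝ, 0 < mh → m mh = (ρ ^ 2 * mh / (1 + mh)) *
      ∫ z : ℝ, stdGauss z * (z ^ 2 *
        ((1 - ρ) * (1 + mh) ^ ((1 : ℝ) / 2) * Real.exp (-(mh / 2) * z ^ 2) + ρ)⁻¹)) :
    Tendsto (fun mh => mh * (ρ - m mh)) atTop (nhds ρ) := by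
  have hratio : Tendsto (fun mh : ℝ => 1 - (1 + mh)⁻¹) atTop (nhds 1) := by
    simpa using (tendsto_inv_atTop_zero.comp
      (tendsto_atTop_add_const_left atTop (1 : ℝ) tendsto_id)).const_sub 1
  have hkey : ∀ᶠ mh in atTop,
      ρ * (1 - (1 + mh)⁻¹) * (1 + mh * overlapDefect ρ mh) = mh * (ρ - m mh) := by
    filter_upwards [eventually_gt_atTop 0] with mh hmh
    have hm' : m mh = ρ ^ 2 * mh / (1 + mh) *
        ∫ z, stdGauss z * (z ^ 2 * (nullWeight ρ mh z + ρ)⁻¹) := hm mh hmh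
    rw [hm', integral_stdGauss_mul_sq_mul_inv_nullWeight_add hρ0 hρ1 (by linarith)]
    field_simp
    ring
  simpa using ((hratio.const_mul ρ).mul
    ((tendsto_mul_overlapDefect hρ0 hρ1).const_add 1)).congr' hkey
end

section
/- Suppose m(α) satisfies m = ρ(1 − m̂^{−1}) and m̂ = 2Cα/√(m(ρ−m)) asymptotically as α → ∞, with constants ρ ∈ (0,1) and C > 0. Then ρ − m(α) ~ ρ³/(4C²α²), and consequently MSE = 2(1 − √(m/ρ)) ~ ρ²/(4C²α²) as α → ∞. -/
/-!
Squaring `ρ - m = ρ / m̂ = ρ √(m (ρ - m)) / (2 C α)` and cancelling one factor `ρ - m > 0` gives the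
exact identity `(ρ - m) · 4C²α² = ρ² m`. With `t = m / ρ` and `ε = ρ² / (4C²α²) → 0` it reads
`1 - t = ε t`, so `t = (1 + ε)⁻¹ → 1`, the first ratio equals `t`, and the second equals
`2 (1 - √t) / ε = 2t / (1 + √t)`, which also tends to `1`.
-/

open Real Filter Topology

theorem sub_mul_eq_sq_mul_of_fixedPoint {ρ C α m mh : ℝ} (hm0 : 0 ≤ m) (hmρ : m < ρ)
    (hm : m = ρ * (1 - mh⁻¹)) (hmh : mh = 2 * C * α / √(m * (ρ - m))) :
    (ρ - m) * (4 * C ^ 2 * α ^ 2) = ρ ^ 2 * m := by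
  have hgap : 0 < ρ - m := sub_pos.2 hmρ
  have hsq : √(m * (ρ - m)) ^ 2 = m * (ρ - m) := sq_sqrt (mul_nonneg hm0 hgap.le)
  have hlin : ρ - m = ρ * √(m * (ρ - m)) / (2 * C * α) := by
    rw [hmh, inv_div] at hm
    linear_combination -hm
  have hCα : 2 * C * α ≠ 0 := by
    rintro h
    rw [h, div_zero] at hlin
    exact hgap.ne' hlin
  have hprod : (ρ - m) * (2 * C * α) = ρ * √(m * (ρ - m)) := (eq_div_iff hCα).1 hlin
  have hquad : (ρ - m) * ((ρ - m) * (4 * C ^ 2 * α ^ 2)) = (ρ - m) * (ρ ^ 2 * m) := by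
    linear_combination ((ρ - m) * (2 * C * α) + ρ * √(m * (ρ - m))) * hprod + ρ ^ 2 * hsq
  exact mul_left_cancel₀ hgap.ne' hquad

theorem two_mul_one_sub_sqrt_div_eq {t ε : ℝ} (ht : 0 ≤ t) (hε : ε ≠ 0) (h : 1 - t = ε * t) :
    2 * (1 - √t) / ε = 2 * t / (1 + √t) := by
  have hsq : √t ^ 2 = t := sq_sqrt ht
  field_simp
  linear_combination h - hsq

theorem tendsto_one_of_one_sub_eq_mul {ι : Type*} {l : Filter ι} {t ε : ι → ℝ}
    (hε : Tendsto ε l (𝓝 0)) (h : ∀ᶠ x in l, 1 - t x = ε x * t x) : Tendsto t l (𝓝 1) := by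
  have hinv := (hε.const_add 1).inv₀ (by norm_num)
  rw [add_zero, inv_one] at hinv
  refine hinv.congr' ?_
  filter_upwards [h] with x hx
  exact inv_eq_of_mul_eq_one_left (by linear_combination -hx)

theorem Filter.Tendsto.two_mul_div_one_add_sqrt {ι : Type*} {l : Filter ι} {f : ι → ℝ}
    (hf : Tendsto f l (𝓝 1)) : Tendsto (fun x => 2 * f x / (1 + √(f x))) l (𝓝 1) := by
  have h := (hf.const_mul 2).div (hf.sqrt.const_add 1) (by norm_num)
  norm_num at h
  exact h

theorem mse_asymptotics_general (ρ C : ℝ) (hρ0 : 0 < ρ) (hC : 0 < C)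
    (m mh : ℝ → ℝ)
    (hrange : ∀ᶠ α in atTop, 0 < m α ∧ m α < ρ)
    (hm : ∀ᶠ α in atTop, m α = ρ * (1 - (mh α)⁻¹))
    (hmh : ∀ᶠ α in atTop, mh α = 2 * C * α / Real.sqrt (m α * (ρ - m α))) :
    Tendsto (fun α => (ρ - m α) / (ρ ^ 3 / (4 * C ^ 2 * α ^ 2))) atTop (nhds 1) ∧
    Tendsto (fun α => (2 * (1 - Real.sqrt (m α / ρ))) / (ρ ^ 2 / (4 * C ^ 2 * α ^ 2)))
      atTop (nhds 1) := by
  have hε : Tendsto (fun α : ℝ => ρ ^ 2 / (4 * C ^ 2 * α ^ 2)) atTop (𝓝 0) :=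
    tendsto_const_nhds.div_atTop <|
      (tendsto_pow_atTop two_ne_zero).const_mul_atTop (by positivity)
  have key : ∀ᶠ α in atTop, 0 < α ∧ 0 < m α ∧
      (ρ - m α) * (4 * C ^ 2 * α ^ 2) = ρ ^ 2 * m α := by
    filter_upwards [eventually_gt_atTop 0, hrange, hm, hmh] with α hα ⟨hm0, hmρ⟩ hmα hmhα
    exact ⟨hα, hm0, sub_mul_eq_sq_mul_of_fixedPoint hm0.le hmρ hmα hmhα⟩
  have hrel : ∀ᶠ α in atTop, 1 - m α / ρ = ρ ^ 2 / (4 * C ^ 2 * α ^ 2) * (m α / ρ) := by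
    filter_upwards [key] with α ⟨hα, _, h⟩
    field_simp
    linear_combination h
  have ht : Tendsto (fun α => m α / ρ) atTop (𝓝 1) := tendsto_one_of_one_sub_eq_mul hε hrel
  refine ⟨ht.congr' ?_, ht.two_mul_div_one_add_sqrt.congr' ?_⟩
  · filter_upwards [key] with α ⟨hα, _, h⟩
    field_simp
    linear_combination -h
  · filter_upwards [key, hrel] with α ⟨hα, hm0, _⟩ h
    exact (two_mul_one_sub_sqrt_div_eq (by positivity) (by positivity) h).symm

/-- from m = ρ(1 − m̂⁻¹) and m̂ = 2Cα/√(m(ρ−m)) asymptotically,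
ρ − m(α) ~ ρ³/(4C²α²) and MSE = 2(1 − √(m/ρ)) ~ ρ²/(4C²α²) as α → ∞. -/
theorem mse_asymptotics (ρ C : ℝ) (hρ0 : 0 < ρ) (hρ1 : ρ < 1) (hC : 0 < C)
    (m mh : ℝ → ℝ)
    (hrange : ∀ᶠ α in atTop, 0 < m α ∧ m α < ρ)
    (hm : ∀ᶠ α in atTop, m α = ρ * (1 - (mh α)⁻¹))
    (hmh : ∀ᶠ α in atTop, mh α = 2 * C * α / Real.sqrt (m α * (ρ - m α))) :
    Tendsto (fun α => (ρ - m α) / (ρ ^ 3 / (4 * C ^ 2 * α ^ 2))) atTop (nhds 1) ∧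
    Tendsto (fun α => (2 * (1 - Real.sqrt (m α / ρ))) / (ρ ^ 2 / (4 * C ^ 2 * α ^ 2)))
      atTop (nhds 1) :=
  mse_asymptotics_general ρ C hρ0 hC m mh hrange hm hmh
end
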